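/- arXiv:2402.02406 — 2 statements merged into one kernel-verified Lean document; each statement's English description precedes it below -/
import Mathlib

section
/- Let 𝔤 be a finite-dimensional real Lie algebra such that for every U ∈ 𝔤 the endomorphism ad(U) : 𝔤 → 𝔤 is semisimple. Then every element U of the ideal [rad(𝔤), 𝔤] is central in 𝔤, i.e., [U, W] = 0 for all W ∈ 𝔤. -/
/-!
If `⁅I, I⁆` is central for an ideal `I`, then for `x ∈ I` the map `(ad x)²` takes values in the
centre, so `(ad x)³ = 0`; a nilpotent semisimple endomorphism vanishes, hence `x` is central.
Induction along the derived series therefore puts every solvable ideal, in particular the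
radical, inside the centre, and `⁅rad 𝔤, 𝔤⁆ ⊆ rad 𝔤`.
-/

namespace LieAlgebra

variable {R L : Type*} [CommRing R] [LieRing L] [LieAlgebra R L]

lemma mem_center_of_isSemisimple_ad_of_lie_lie_mem_center {x : L}
    (hx : (ad R L x).IsSemisimple) (h : ∀ y, ⁅x, ⁅x, y⁆⁆ ∈ center R L) : x ∈ center R L := by
  have hnil : IsNilpotent (ad R L x) :=
    ⟨3, LinearMap.ext fun y ↦ by simpa [pow_succ] using h y x⟩
  rw [← self_module_ker_eq_center, LieModule.mem_ker]
  exact LinearMap.congr_fun (Module.End.eq_zero_of_isNilpotent_isSemisimple hnil hx)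

lemma le_center_of_lie_le_center {I : LieIdeal R L} (had : ∀ x ∈ I, (ad R L x).IsSemisimple)
    (hI : ⁅I, I⁆ ≤ center R L) : I ≤ center R L := fun x hx ↦
  mem_center_of_isSemisimple_ad_of_lie_lie_mem_center (had x hx) fun y ↦
    hI (LieSubmodule.lie_mem_lie hx (lie_mem_left R L I x y hx))

lemma le_center_of_derivedSeriesOfIdeal_eq_bot :
    ∀ (k : ℕ) {I : LieIdeal R L}, (∀ x ∈ I, (ad R L x).IsSemisimple) →
      derivedSeriesOfIdeal R L k I = ⊥ → I ≤ center R L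
  | 0, _, _, hI => by rw [derivedSeriesOfIdeal_zero] at hI; exact hI ▸ bot_le
  | k + 1, I, had, hI => by
    refine le_center_of_lie_le_center had
      (le_center_of_derivedSeriesOfIdeal_eq_bot k (fun x hx ↦ had x ?_) ?_)
    · exact LieSubmodule.lie_le_right I I hx
    · rwa [derivedSeriesOfIdeal_add I k 1, derivedSeriesOfIdeal_succ,
        derivedSeriesOfIdeal_zero] at hI

lemma le_center_of_isSolvable (I : LieIdeal R L) [IsSolvable I]
    (had : ∀ x ∈ I, (ad R L x).IsSemisimple) : I ≤ center R L := by
  obtain ⟨k, hk⟩ := IsSolvable.solvable R I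
  exact le_center_of_derivedSeriesOfIdeal_eq_bot k had ((I.derivedSeries_eq_bot_iff k).mp hk)

lemma radical_le_center [IsNoetherian R L] (had : ∀ x : L, (ad R L x).IsSemisimple) :
    radical R L ≤ center R L :=
  le_center_of_isSolvable _ fun x _ ↦ had x

end LieAlgebra

/-- Let 𝔤 be a finite-dimensional real Lie algebra such that for every
`U ∈ 𝔤` the endomorphism `ad U : 𝔤 → 𝔤` is semisimple.  Then every element of the ideal
`⁅rad 𝔤, 𝔤⁆` is central in 𝔤. -/
theorem bracket_radical_central_of_ad_semisimple
    (L : Type*) [LieRing L] [LieAlgebra ℝ L] [FiniteDimensional ℝ L]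
    (had : ∀ U : L, Module.End.IsSemisimple (LieAlgebra.ad ℝ L U)) :
    ∀ U ∈ ⁅LieAlgebra.radical ℝ L, (⊤ : LieIdeal ℝ L)⁆, ∀ W : L, ⁅U, W⁆ = 0 := by
  intro U hU W
  have hUc : U ∈ LieAlgebra.center ℝ L :=
    LieAlgebra.radical_le_center had (LieSubmodule.lie_le_left _ _ hU)
  rw [← lie_skew, hUc W, neg_zero]
end

section
/- Let 𝔤 be a finite-dimensional real Lie algebra whose Killing form B satisfies B(U,U) ≤ 0 for every U ∈ 𝔤, and let 𝔯' = {U ∈ 𝔤 : B(U,W) = 0 for all W ∈ 𝔤} (an ideal of 𝔤). Then the quotient Lie algebra 𝔤/𝔯' is the internal direct sum of its derived ideal [𝔤/𝔯', 𝔤/𝔯'] and its center. -/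
/-!
The Killing form descends to an invariant symmetric form on `𝔤/𝔯'`, and that form is anisotropic:
by Cauchy–Schwarz, a vector isotropic for a semidefinite symmetric form lies in its kernel. For an
invariant form `Φ` we have `Φ ⁅y, z⁆ x = -Φ z ⁅y, x⁆`, so the orthogonal complement of the derived
ideal is the centre as soon as `Φ` is nondegenerate, and in finite dimension an anisotropic form
makes every subspace complementary to its orthogonal.
-/

namespace LinearMap.BilinForm

lemma apply_apply_same_eq_zero_iff_of_nonpos {R M : Type*} [CommRing R] [LinearOrder R]
    [IsStrictOrderedRing R] [AddCommGroup M] [Module R M] {B : LinearMap.BilinForm R M}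
    (hs : ∀ x, B x x ≤ 0) (hB : LinearMap.IsSymm B) {x : M} :
    B x x = 0 ↔ x ∈ LinearMap.ker B := by
  have hneg : LinearMap.IsSymm (-B) := ⟨fun x y ↦ by simpa using hB.eq x y⟩
  simpa using (-B).apply_apply_same_eq_zero_iff (fun y ↦ by simpa using hs y) hneg (x := x)

lemma isCompl_orthogonal_of_anisotropic {K V : Type*} [Field K] [AddCommGroup V] [Module K V]
    [FiniteDimensional K V] {B : LinearMap.BilinForm K V} (hB : B.IsRefl)
    (hanis : B.toQuadraticMap.Anisotropic) (W : Submodule K V) :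
    IsCompl W (B.orthogonal W) :=
  (isCompl_orthogonal_iff_disjoint hB).2 <| Submodule.disjoint_def.2 fun x hxW hxW' ↦
    hanis x (hxW' x hxW)

section liftQ

variable {R M : Type*} [CommRing R] [AddCommGroup M] [Module R M]

abbrev liftQ (B : LinearMap.BilinForm R M) (N : Submodule R M) (hB : B.IsRefl)
    (hN : N ≤ ker B) : LinearMap.BilinForm R (M ⧸ N) :=
  LinearMap.IsRefl.liftQ₂ B N hB hN

variable {B : LinearMap.BilinForm R M} {N : Submodule R M} (hB : B.IsRefl) (hN : N ≤ ker B)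

lemma isRefl_liftQ : (B.liftQ N hB hN).IsRefl := by
  rintro ⟨x⟩ ⟨y⟩
  exact hB x y

lemma anisotropic_liftQ (h : ∀ x, B x x = 0 → x ∈ N) :
    (B.liftQ N hB hN).toQuadraticMap.Anisotropic := by
  rintro ⟨x⟩ hx
  exact (Submodule.Quotient.mk_eq_zero N).2 (h x hx)

lemma lieInvariant_liftQ {L : Type*} [LieRing L] [LieAlgebra R L] {Φ : LinearMap.BilinForm R L}
    {I : LieIdeal R L} (hΦ : Φ.IsRefl) (hI : I.toSubmodule ≤ ker Φ) (hinv : Φ.lieInvariant L) :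
    (Φ.liftQ I.toSubmodule hΦ hI).lieInvariant (L ⧸ I) := by
  rintro ⟨x⟩ ⟨y⟩ ⟨z⟩
  exact hinv x y z

end liftQ

end LinearMap.BilinForm

namespace LieAlgebra

variable {R L : Type*} [CommRing R] [LieRing L] [LieAlgebra R L] {Φ : LinearMap.BilinForm R L}

lemma mem_orthogonal_derived_iff (hinv : Φ.lieInvariant L) (x : L) :
    x ∈ Φ.orthogonal (⁅(⊤ : LieIdeal R L), (⊤ : LieIdeal R L)⁆ : LieIdeal R L).toSubmodule ↔
      ∀ y z : L, Φ z ⁅y, x⁆ = 0 := by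
  rw [LieSubmodule.lieIdeal_oper_eq_linear_span']
  change Submodule.span R _ ≤ LinearMap.ker (Φ.flip x) ↔ _
  simp only [Submodule.span_le, Set.subset_def, LieSubmodule.mem_top, true_and,
    Set.mem_ofPred_eq, SetLike.mem_coe, LinearMap.mem_ker]
  refine ⟨fun h y z ↦ ?_, ?_⟩
  · rw [← neg_eq_zero, ← hinv]
    exact h _ ⟨y, z, rfl⟩
  · rintro h _ ⟨y, z, rfl⟩
    show Φ ⁅y, z⁆ x = 0
    rw [hinv, h, neg_zero]

lemma center_toSubmodule_eq_orthogonal_derived (hinv : Φ.lieInvariant L)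
    (hsep : Φ.SeparatingRight) :
    (center R L).toSubmodule =
      Φ.orthogonal (⁅(⊤ : LieIdeal R L), (⊤ : LieIdeal R L)⁆ : LieIdeal R L).toSubmodule := by
  ext x
  rw [mem_orthogonal_derived_iff hinv, LieSubmodule.mem_toSubmodule,
    LieModule.mem_maxTrivSubmodule]
  exact ⟨fun hx y z ↦ by rw [hx, map_zero], fun hx y ↦ hsep _ (hx y)⟩

end LieAlgebra

theorem LieAlgebra.isCompl_derived_center_of_anisotropic {K L : Type*} [Field K] [LieRing L]
    [LieAlgebra K L] [FiniteDimensional K L] {Φ : LinearMap.BilinForm K L}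
    (hinv : Φ.lieInvariant L) (hrefl : Φ.IsRefl) (hanis : Φ.toQuadraticMap.Anisotropic) :
    IsCompl (⁅(⊤ : LieIdeal K L), (⊤ : LieIdeal K L)⁆ : LieIdeal K L).toSubmodule
      (center K L).toSubmodule := by
  rw [center_toSubmodule_eq_orthogonal_derived hinv fun y hy ↦ hanis y (hy y)]
  exact Φ.isCompl_orthogonal_of_anisotropic hrefl hanis _

/-- Let 𝔤 be a finite-dimensional real Lie algebra whose Killing form `B`
satisfies `B(U,U) ≤ 0` for all `U`, and let `𝔯'` be the ideal
`{U ∈ 𝔤 : B(U,W) = 0 for all W}`.  Then the quotient Lie algebra `𝔤/𝔯'` is the internal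
direct sum of its derived ideal `⁅𝔤/𝔯', 𝔤/𝔯'⁆` and its center. -/
theorem quotient_by_killing_kernel_reductive
    (L : Type*) [LieRing L] [LieAlgebra ℝ L] [FiniteDimensional ℝ L]
    (hB : ∀ U : L, killingForm ℝ L U U ≤ 0)
    (𝔯' : LieIdeal ℝ L)
    (h𝔯' : ∀ U : L, U ∈ 𝔯' ↔ ∀ W : L, killingForm ℝ L U W = 0) :
    IsCompl
      (⁅(⊤ : LieIdeal ℝ (L ⧸ 𝔯')), (⊤ : LieIdeal ℝ (L ⧸ 𝔯'))⁆ : LieIdeal ℝ (L ⧸ 𝔯')).toSubmodule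
      (LieAlgebra.center ℝ (L ⧸ 𝔯')).toSubmodule := by
  have hrefl : (killingForm ℝ L).IsRefl := (LieModule.traceForm_isSymm ℝ L L).isRefl
  have hker : 𝔯'.toSubmodule ≤ LinearMap.ker (killingForm ℝ L) := fun U hU ↦
    LinearMap.ext ((h𝔯' U).1 hU)
  have hisotropic : ∀ U, killingForm ℝ L U U = 0 → U ∈ 𝔯' := fun U hU ↦
    (h𝔯' U).2 <| LinearMap.ext_iff.1 <|
      (LinearMap.BilinForm.apply_apply_same_eq_zero_iff_of_nonpos hB
        (LieModule.traceForm_isSymm ℝ L L)).1 hU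
  exact LieAlgebra.isCompl_derived_center_of_anisotropic
    (LinearMap.BilinForm.lieInvariant_liftQ hrefl hker (LieModule.traceForm_lieInvariant ℝ L L))
    (LinearMap.BilinForm.isRefl_liftQ hrefl hker)
    (LinearMap.BilinForm.anisotropic_liftQ hrefl hker hisotropic)
end
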